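/- The boundary measurement is bounded by the H¹₀-norm of the initial datum: ∫₀ᵀ ∫_{∂Ω} y(x,t)² dμ(x) dt ≤ C_γ² · C(T)² · T · ∫_{ℝⁿ} |∇f(x)|² dx, where C(T)² = 1 + (2/C₀²) · max{1, c_max² T²}. (Equivalently, the photoacoustic forward operator f ↦ y|_{∂Ω×(0,T)} satisfies the norm bound ‖L‖ ≤ C_γ · C(T) · √T.) -/

import Mathlib

open MeasureTheory

/-- Sum of the second partial derivatives (spatial Laplacian) of `u` at `x`. -/
noncomputable def spatialLaplacian {n : ℕ} (u : EuclideanSpace ℝ (Fin n) → ℝ)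
    (x : EuclideanSpace ℝ (Fin n)) : ℝ :=
  ∑ i : Fin n,
    fderiv ℝ (fun z => fderiv ℝ u z (EuclideanSpace.single i 1)) x (EuclideanSpace.single i 1)

/-!
The weighted energy `E(t) = ∫ (c⁻² (∂ₜy)² + |∇ₓy|²) dx` is conserved: by the wave equation its
time derivative is `2 ∑ᵢ ∫ (∂ₜy ∂ᵢ²y + ∂ᵢ∂ₜy ∂ᵢy) dx`, which vanishes after an integration by
parts in `xᵢ`. As `∂ₜy(·, 0) = 0`, `E(t) = ‖∇f‖²`, which bounds both `‖∇ₓy(t)‖²` and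
`c_max⁻² ‖∂ₜy(t)‖²`. Writing `y(t) = f + ∫₀ᵗ ∂ₛy ds` and using Cauchy–Schwarz in time gives
`‖y(t)‖² ≤ 2‖f‖² + 2 c_max² t² ‖∇f‖²`, and the Poincaré-type hypothesis bounds `‖f‖²` by
`(C₀⁻² - 1) ‖∇f‖²`. So the squared `H¹`-norm of `y(t)` is at most `C(T)² ‖∇f‖²` for `t ∈ [0, T]`;
the trace inequality and an integration over `[0, T]` conclude.
-/

open Set Filter Topology

section SpaceTimeCalculus

variable {E : Type*} [NormedAddCommGroup E] [NormedSpace ℝ E]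

noncomputable def timeDeriv (u : E × ℝ → ℝ) (p : E × ℝ) : ℝ := fderiv ℝ u p (0, 1)

noncomputable def spaceDeriv (v : E) (u : E × ℝ → ℝ) (p : E × ℝ) : ℝ := fderiv ℝ u p (v, 0)

variable {u : E × ℝ → ℝ}

theorem contDiff_timeDeriv {k : ℕ} (hu : ContDiff ℝ (k + 1) u) : ContDiff ℝ k (timeDeriv u) :=
  (hu.fderiv_right le_rfl).clm_apply contDiff_const

theorem contDiff_spaceDeriv {k : ℕ} (hu : ContDiff ℝ (k + 1) u) (v : E) :
    ContDiff ℝ k (spaceDeriv v u) :=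
  (hu.fderiv_right le_rfl).clm_apply contDiff_const

theorem hasDerivAt_timeSlice {x : E} {t : ℝ} (hu : DifferentiableAt ℝ u (x, t)) :
    HasDerivAt (fun s => u (x, s)) (timeDeriv u (x, t)) t :=
  hu.hasFDerivAt.comp_hasDerivAt t ((hasDerivAt_const t x).prodMk (hasDerivAt_id t))

theorem deriv_timeSlice (hu : Differentiable ℝ u) (x : E) :
    deriv (fun s => u (x, s)) = fun t => timeDeriv u (x, t) :=
  funext fun t => (hasDerivAt_timeSlice (hu (x, t))).deriv

theorem deriv_deriv_timeSlice (hu : ContDiff ℝ 2 u) (x : E) (t : ℝ) :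
    deriv (deriv fun s => u (x, s)) t = timeDeriv (timeDeriv u) (x, t) := by
  rw [deriv_timeSlice (hu.differentiable two_ne_zero),
    deriv_timeSlice ((contDiff_timeDeriv hu).differentiable one_ne_zero)]

theorem hasFDerivAt_spaceSlice {x : E} {t : ℝ} (hu : DifferentiableAt ℝ u (x, t)) :
    HasFDerivAt (fun z => u (z, t))
      ((fderiv ℝ u (x, t)).comp ((ContinuousLinearMap.id ℝ E).prod 0)) x :=
  hu.hasFDerivAt.comp x ((hasFDerivAt_id x).prodMk (hasFDerivAt_const t x))

theorem fderiv_spaceSlice_apply {x : E} {t : ℝ} (hu : DifferentiableAt ℝ u (x, t)) (v : E) :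
    fderiv ℝ (fun z => u (z, t)) x v = spaceDeriv v u (x, t) := by
  rw [(hasFDerivAt_spaceSlice hu).fderiv]
  rfl

theorem fderiv_fderiv_apply_comm (hu : ContDiff ℝ 2 u) (p a b : E × ℝ) :
    fderiv ℝ (fun q => fderiv ℝ u q a) p b = fderiv ℝ (fun q => fderiv ℝ u q b) p a := by
  have hd : DifferentiableAt ℝ (fderiv ℝ u) p :=
    (hu.fderiv_right (m := 1) (by norm_num)).differentiable one_ne_zero p
  simp only [fderiv_clm_apply hd (differentiableAt_const _), fderiv_fun_const, Pi.zero_apply,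
    ContinuousLinearMap.comp_zero, zero_add, ContinuousLinearMap.flip_apply]
  exact hu.contDiffAt.isSymmSndFDerivAt (by simp [minSmoothness_of_isRCLikeNormedField]) _ _

theorem timeDeriv_spaceDeriv (hu : ContDiff ℝ 2 u) (v : E) :
    timeDeriv (spaceDeriv v u) = spaceDeriv v (timeDeriv u) :=
  funext fun p => fderiv_fderiv_apply_comm hu p _ _

end SpaceTimeCalculus

section EuclideanSlices

variable {ι : Type*} [Fintype ι] [DecidableEq ι]

theorem norm_gradient_sq_eq_sum (h : EuclideanSpace ℝ ι → ℝ) (x : EuclideanSpace ℝ ι) :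
    ‖gradient h x‖ ^ 2 = ∑ i, fderiv ℝ h x (EuclideanSpace.single i 1) ^ 2 := by
  simp only [EuclideanSpace.real_norm_sq_eq, ← toDual_gradient,
    InnerProductSpace.toDual_apply_apply, EuclideanSpace.inner_single_right]
  simp

theorem norm_gradient_slice_sq {u : EuclideanSpace ℝ ι × ℝ → ℝ} (hu : Differentiable ℝ u)
    (x : EuclideanSpace ℝ ι) (t : ℝ) :
    ‖gradient (fun z => u (z, t)) x‖ ^ 2
      = ∑ i, spaceDeriv (EuclideanSpace.single i 1) u (x, t) ^ 2 := by
  simp only [norm_gradient_sq_eq_sum, fderiv_spaceSlice_apply (hu _)]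

end EuclideanSlices

theorem spatialLaplacian_slice {n : ℕ} {u : EuclideanSpace ℝ (Fin n) × ℝ → ℝ}
    (hu : ContDiff ℝ 2 u) (x : EuclideanSpace ℝ (Fin n)) (t : ℝ) :
    spatialLaplacian (fun z => u (z, t)) x
      = ∑ i, spaceDeriv (EuclideanSpace.single i 1)
          (spaceDeriv (EuclideanSpace.single i 1) u) (x, t) := by
  refine Finset.sum_congr rfl fun i _ => ?_
  have hslice : (fun z => fderiv ℝ (fun z' => u (z', t)) z (EuclideanSpace.single i 1))
      = fun z => spaceDeriv (EuclideanSpace.single i 1) u (z, t) :=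
    funext fun z => fderiv_spaceSlice_apply (hu.differentiable two_ne_zero _) _
  rw [hslice, fderiv_spaceSlice_apply ((contDiff_spaceDeriv hu _).differentiable one_ne_zero _)]

section Cylinder

variable {E : Type*} [NormedAddCommGroup E] [NormedSpace ℝ E] {K : Set E} {T : ℝ}

theorem eqOn_fderiv_zero_of_eqOn_zero {u : E × ℝ → ℝ} (hu : Continuous (fderiv ℝ u))
    (hK : IsClosed K) (hT : 0 < T) (h : EqOn u 0 (Kᶜ ×ˢ Icc 0 T)) :
    EqOn (fderiv ℝ u) 0 (Kᶜ ×ˢ Icc 0 T) := by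
  -- `fderiv ℝ u` vanishes on the open set `Kᶜ × (0, T)`, whose closure contains `Kᶜ × [0, T]`.
  have hopen : IsOpen (Kᶜ ×ˢ Ioo 0 T) := hK.isOpen_compl.prod isOpen_Ioo
  have hinner : EqOn (fderiv ℝ u) 0 (Kᶜ ×ˢ Ioo 0 T) := fun p hp => by
    have hloc : u =ᶠ[𝓝 p] fun _ => 0 := eventually_of_mem (hopen.mem_nhds hp) fun q hq =>
      h (Set.prod_mono_right Ioo_subset_Icc_self hq)
    rw [hloc.fderiv_eq, fderiv_const_apply]
    rfl
  refine hinner.of_subset_closure hu.continuousOn continuousOn_const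
    (Set.prod_mono_right Ioo_subset_Icc_self) ?_
  rw [closure_prod_eq, closure_Ioo hT.ne]
  exact prod_mono subset_closure subset_rfl

variable {u : E × ℝ → ℝ}

theorem eqOn_timeDeriv_zero (hu : ContDiff ℝ 1 u) (hK : IsClosed K) (hT : 0 < T)
    (h : EqOn u 0 (Kᶜ ×ˢ Icc 0 T)) : EqOn (timeDeriv u) 0 (Kᶜ ×ˢ Icc 0 T) := fun p hp => by
  simp [timeDeriv, eqOn_fderiv_zero_of_eqOn_zero (hu.continuous_fderiv one_ne_zero) hK hT h hp]

theorem eqOn_spaceDeriv_zero (hu : ContDiff ℝ 1 u) (hK : IsClosed K) (hT : 0 < T)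
    (h : EqOn u 0 (Kᶜ ×ˢ Icc 0 T)) (v : E) : EqOn (spaceDeriv v u) 0 (Kᶜ ×ˢ Icc 0 T) :=
  fun p hp => by
  simp [spaceDeriv, eqOn_fderiv_zero_of_eqOn_zero (hu.continuous_fderiv one_ne_zero) hK hT h hp]

end Cylinder

section Integrability

variable {X : Type*} [TopologicalSpace X] [T2Space X] [MeasurableSpace X] [OpensMeasurableSpace X]
  {μ : Measure X} [IsFiniteMeasureOnCompacts μ] {K : Set X} {T : ℝ} {u : X × ℝ → ℝ}

theorem integrable_slice_of_eqOn_zero (hu : Continuous u) (hK : IsCompact K)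
    (h : EqOn u 0 (Kᶜ ×ˢ Icc 0 T)) {t : ℝ} (ht : t ∈ Icc 0 T) :
    Integrable (fun x => u (x, t)) μ :=
  (hu.comp (continuous_id.prodMk continuous_const)).integrable_of_hasCompactSupport
    (HasCompactSupport.intro hK fun _ hx => h ⟨hx, ht⟩)

theorem integrable_sq_slice_of_eqOn_zero (hu : Continuous u) (hK : IsCompact K)
    (h : EqOn u 0 (Kᶜ ×ˢ Icc 0 T)) {t : ℝ} (ht : t ∈ Icc 0 T) :
    Integrable (fun x => u (x, t) ^ 2) μ :=
  integrable_slice_of_eqOn_zero (hu.pow 2) hK (fun p hp => by simp [h hp]) ht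

theorem integrable_prod_restrict_of_eqOn_zero [SecondCountableTopology X] [SFinite μ]
    (hu : Continuous u) (hK : IsCompact K) (h : EqOn u 0 (Kᶜ ×ˢ Icc 0 T)) {t : ℝ} (ht : t ≤ T) :
    Integrable u (μ.prod (volume.restrict (Ioc 0 t))) := by
  rw [← Measure.restrict_univ (μ := μ), Measure.prod_restrict]
  have hK' : IntegrableOn u (K ×ˢ Icc 0 t) (μ.prod volume) :=
    hu.continuousOn.integrableOn_compact (hK.prod isCompact_Icc)
  refine (hK'.of_forall_sdiff_eq_zero (MeasurableSet.univ.prod measurableSet_Icc) ?_).mono_set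
    (Set.prod_mono_right Ioc_subset_Icc_self)
  rintro ⟨x, s⟩ ⟨⟨-, hs⟩, hxs⟩
  exact h ⟨fun hx => hxs ⟨hx, hs⟩, hs.1, hs.2.trans ht⟩

theorem integrable_sq_sub_initial (hu : Continuous u) (hK : IsCompact K) (hT : 0 < T)
    (hu0 : EqOn u 0 (Kᶜ ×ˢ Icc 0 T)) {t : ℝ} (ht : t ∈ Icc 0 T) :
    Integrable (fun x => (u (x, t) - u (x, 0)) ^ 2) μ :=
  integrable_sq_slice_of_eqOn_zero (hu.sub (hu.comp (continuous_fst.prodMk continuous_const)))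
    hK (fun p hp => by
      simp [hu0 hp, hu0 (show (p.1, (0 : ℝ)) ∈ Kᶜ ×ˢ Icc 0 T from ⟨hp.1, le_rfl, hT.le⟩)]) ht

end Integrability

theorem integral_intervalIntegral_swap {X : Type*} [MeasurableSpace X] {μ : Measure X}
    [SFinite μ] {F : X × ℝ → ℝ} {t : ℝ} (ht : 0 ≤ t)
    (hF : Integrable F (μ.prod (volume.restrict (Ioc 0 t)))) :
    ∫ x, (∫ s in 0..t, F (x, s)) ∂μ = ∫ s in 0..t, ∫ x, F (x, s) ∂μ := by
  simp only [intervalIntegral.integral_of_le ht]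
  exact integral_integral_swap hF

theorem intervalIntegral_le_mul_of_le {φ : ℝ → ℝ} {B t : ℝ} (ht : 0 ≤ t)
    (hφ0 : ∀ s ∈ Ioc 0 t, 0 ≤ φ s) (hφB : ∀ s ∈ Ioc 0 t, φ s ≤ B) :
    ∫ s in 0..t, φ s ≤ B * t := by
  have h := intervalIntegral.norm_integral_le_of_norm_le_const (a := 0) (b := t) (C := B)
    fun s hs => by
      rw [uIoc_of_le ht] at hs
      rw [Real.norm_of_nonneg (hφ0 s hs)]
      exact hφB s hs
  rw [sub_zero, abs_of_nonneg ht] at h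
  exact (le_abs_self _).trans h

theorem sq_intervalIntegral_le {v : ℝ → ℝ} (hv : Continuous v) {t : ℝ} (ht : 0 ≤ t) :
    (∫ s in (0 : ℝ)..t, v s) ^ 2 ≤ t * ∫ s in (0 : ℝ)..t, v s ^ 2 := by
  set I := ∫ s in (0 : ℝ)..t, v s
  set J := ∫ s in (0 : ℝ)..t, v s ^ 2
  -- `0 ≤ ∫ (t v - I)² = t (t J - I²)`
  have hexpand : ∫ s in (0 : ℝ)..t, (t * v s - I) ^ 2 = t * (t * J - I ^ 2) := by
    have hsq : (fun s => (t * v s - I) ^ 2)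
        = fun s => t ^ 2 * v s ^ 2 - 2 * t * I * v s + I ^ 2 := by
      ext s; ring
    have hint : ∀ w : ℝ → ℝ, Continuous w → IntervalIntegrable w volume 0 t :=
      fun w hw => hw.intervalIntegrable _ _
    rw [hsq, intervalIntegral.integral_add (hint _ (by fun_prop)) intervalIntegrable_const,
      intervalIntegral.integral_sub (hint _ (by fun_prop)) (hint _ (by fun_prop)),
      intervalIntegral.integral_const_mul, intervalIntegral.integral_const_mul,
      intervalIntegral.integral_const]
    simp only [sub_zero, smul_eq_mul, I, J]
    ring
  rcases ht.eq_or_lt with rfl | ht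
  · simp [I]
  · have h0 : 0 ≤ t * (t * J - I ^ 2) :=
      hexpand ▸ intervalIntegral.integral_nonneg ht.le fun s _ => sq_nonneg _
    nlinarith [(mul_nonneg_iff_of_pos_left ht).mp h0]

section IntegrationByParts

variable {E : Type*} [NormedAddCommGroup E] [NormedSpace ℝ E] [FiniteDimensional ℝ E]
  [MeasurableSpace E] [BorelSpace E] {μ : Measure E} [μ.IsAddHaarMeasure]
  {K : Set E} {T : ℝ} {v w : E × ℝ → ℝ}

theorem integral_mul_spaceDeriv_eq_neg (hv : ContDiff ℝ 1 v) (hw : ContDiff ℝ 1 w)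
    (hK : IsCompact K) (hT : 0 < T) (hv0 : EqOn v 0 (Kᶜ ×ˢ Icc 0 T)) {t : ℝ}
    (ht : t ∈ Icc 0 T) (e : E) :
    ∫ x, v (x, t) * spaceDeriv e w (x, t) ∂μ = -∫ x, spaceDeriv e v (x, t) * w (x, t) ∂μ := by
  have hvd : ∀ x, DifferentiableAt ℝ v (x, t) := fun x => hv.differentiable one_ne_zero _
  have hwd : ∀ x, DifferentiableAt ℝ w (x, t) := fun x => hw.differentiable one_ne_zero _
  have hdv : EqOn (spaceDeriv e v) 0 (Kᶜ ×ˢ Icc 0 T) :=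
    eqOn_spaceDeriv_zero hv hK.isClosed hT hv0 e
  have hint : ∀ F : E × ℝ → ℝ, Continuous F → EqOn F 0 (Kᶜ ×ˢ Icc 0 T) →
      ∀ G : E × ℝ → ℝ, Continuous G → Integrable (fun x => F (x, t) * G (x, t)) μ :=
    fun F hF hF0 G hG => integrable_slice_of_eqOn_zero (hF.mul hG) hK
      (fun p hp => by simp [hF0 hp]) ht
  have key := integral_mul_fderiv_eq_neg_fderiv_mul_of_integrable (μ := μ)
    (f := fun x => v (x, t)) (g := fun x => w (x, t)) (v := e) ?_ ?_ ?_
    (fun x _ => (hasFDerivAt_spaceSlice (hvd x)).differentiableAt)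
    (fun x _ => (hasFDerivAt_spaceSlice (hwd x)).differentiableAt)
  · simpa only [fderiv_spaceSlice_apply (hvd _), fderiv_spaceSlice_apply (hwd _)] using key
  · simp only [fderiv_spaceSlice_apply (hvd _)]
    exact hint _ ((contDiff_spaceDeriv hv e).continuous) hdv _ hw.continuous
  · simp only [fderiv_spaceSlice_apply (hwd _)]
    exact hint _ hv.continuous hv0 _ (contDiff_spaceDeriv hw e).continuous
  · exact hint _ hv.continuous hv0 _ hw.continuous

end IntegrationByParts

section Displacement

variable {E : Type*} [NormedAddCommGroup E] [NormedSpace ℝ E] [SecondCountableTopology E]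
  [MeasurableSpace E] [BorelSpace E] {μ : Measure E} [IsFiniteMeasureOnCompacts μ] [SFinite μ]
  {u : E × ℝ → ℝ} {K : Set E} {T B : ℝ}

theorem integral_sq_sub_initial_le (hu : ContDiff ℝ 1 u) (hK : IsCompact K) (hT : 0 < T)
    (hu0 : EqOn u 0 (Kᶜ ×ˢ Icc 0 T)) {t : ℝ} (ht : t ∈ Icc 0 T)
    (hB : ∀ s ∈ Icc 0 t, ∫ x, timeDeriv u (x, s) ^ 2 ∂μ ≤ B) :
    ∫ x, (u (x, t) - u (x, 0)) ^ 2 ∂μ ≤ t ^ 2 * B := by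
  have hut : Continuous (timeDeriv u) := (contDiff_timeDeriv (k := 0) hu).continuous
  have hut0 := eqOn_timeDeriv_zero hu hK.isClosed hT hu0
  have hftc : ∀ x, u (x, t) - u (x, 0) = ∫ s in 0..t, timeDeriv u (x, s) := fun x =>
    (intervalIntegral.integral_eq_sub_of_hasDerivAt
      (fun s _ => hasDerivAt_timeSlice (hu.differentiable one_ne_zero _))
      ((hut.comp (Continuous.prodMk_right x)).intervalIntegrable _ _)).symm
  have hprod : Integrable (fun p => timeDeriv u p ^ 2) (μ.prod (volume.restrict (Ioc 0 t))) :=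
    integrable_prod_restrict_of_eqOn_zero (hut.pow 2) hK (fun p hp => by simp [hut0 hp]) ht.2
  calc ∫ x, (u (x, t) - u (x, 0)) ^ 2 ∂μ
      ≤ ∫ x, t * (∫ s in 0..t, timeDeriv u (x, s) ^ 2) ∂μ := by
        refine integral_mono ?_ ?_ fun x => ?_
        · exact integrable_sq_sub_initial hu.continuous hK hT hu0 ht
        · simpa only [intervalIntegral.integral_of_le ht.1] using
            hprod.integral_prod_left.const_mul t
        · rw [hftc]
          exact sq_intervalIntegral_le (hut.comp (Continuous.prodMk_right x)) ht.1
    _ = t * ∫ s in 0..t, ∫ x, timeDeriv u (x, s) ^ 2 ∂μ := by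
        rw [integral_const_mul, integral_intervalIntegral_swap ht.1 hprod]
    _ ≤ t * (B * t) := by
        refine mul_le_mul_of_nonneg_left (intervalIntegral_le_mul_of_le ht.1
          (fun s _ => integral_nonneg fun x => sq_nonneg _) fun s hs => hB s ⟨hs.1.le, hs.2⟩) ht.1
    _ = t ^ 2 * B := by ring

theorem integral_sq_le_of_integral_timeDeriv_sq_le (hu : ContDiff ℝ 1 u) (hK : IsCompact K)
    (hT : 0 < T) (hu0 : EqOn u 0 (Kᶜ ×ˢ Icc 0 T)) {t : ℝ} (ht : t ∈ Icc 0 T)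
    (hB : ∀ s ∈ Icc 0 t, ∫ x, timeDeriv u (x, s) ^ 2 ∂μ ≤ B) :
    ∫ x, u (x, t) ^ 2 ∂μ ≤ 2 * ∫ x, u (x, 0) ^ 2 ∂μ + 2 * t ^ 2 * B := by
  have h0 : Integrable (fun x => u (x, 0) ^ 2) μ :=
    integrable_sq_slice_of_eqOn_zero hu.continuous hK hu0 ⟨le_rfl, hT.le⟩
  have hd : Integrable (fun x => (u (x, t) - u (x, 0)) ^ 2) μ :=
    integrable_sq_sub_initial hu.continuous hK hT hu0 ht
  calc ∫ x, u (x, t) ^ 2 ∂μ ≤ ∫ x, (2 * u (x, 0) ^ 2 + 2 * (u (x, t) - u (x, 0)) ^ 2) ∂μ :=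
        integral_mono (integrable_sq_slice_of_eqOn_zero hu.continuous hK hu0 ht)
          ((h0.const_mul 2).add (hd.const_mul 2))
          fun x => by nlinarith [sq_nonneg (u (x, t) - 2 * u (x, 0))]
    _ = 2 * ∫ x, u (x, 0) ^ 2 ∂μ + 2 * ∫ x, (u (x, t) - u (x, 0)) ^ 2 ∂μ := by
        rw [integral_add (h0.const_mul 2) (hd.const_mul 2), integral_const_mul, integral_const_mul]
    _ ≤ 2 * ∫ x, u (x, 0) ^ 2 ∂μ + 2 * t ^ 2 * B := by
        linarith [integral_sq_sub_initial_le hu hK hT hu0 ht hB]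

end Displacement

theorem two_mul_add_two_mul_le_of_poincare {A E C q : ℝ} (hA : 0 ≤ A) (hE : 0 ≤ E)
    (hC : 0 < C) (hP : C ^ 2 * (A + E) ≤ E) :
    2 * A + 2 * q * E ≤ 2 / C ^ 2 * max 1 q * E := by
  have hC2 : 0 < C ^ 2 := by positivity
  rw [← mul_le_mul_iff_of_pos_left hC2,
    show C ^ 2 * (2 / C ^ 2 * max 1 q * E) = 2 * max 1 q * E by field_simp]
  have hCA : 0 ≤ (1 - C ^ 2) * E := by nlinarith [mul_nonneg hC2.le hA]
  rcases le_total q 1 with hq | hq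
  · rw [max_eq_left hq]
    nlinarith [mul_le_mul_of_nonneg_right hq (mul_nonneg hC2.le hE)]
  · rw [max_eq_right hq]
    nlinarith [mul_nonneg (sub_nonneg.2 hq) hCA]

theorem norm_inv_sq_le {a b : ℝ} (ha : 0 < a) (hab : a ≤ b) : ‖(b ^ 2)⁻¹‖ ≤ (a ^ 2)⁻¹ := by
  rw [Real.norm_of_nonneg (inv_nonneg.2 (sq_nonneg b))]
  exact inv_anti₀ (by positivity) (pow_le_pow_left₀ ha.le hab 2)

theorem one_le_sq_mul_inv_sq {b d : ℝ} (hb : 0 < b) (hbd : b ≤ d) : 1 ≤ d ^ 2 * (b ^ 2)⁻¹ := by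
  rw [← div_eq_mul_inv, one_le_div (by positivity)]
  exact pow_le_pow_left₀ hb.le hbd 2

section WaveEnergy

variable {ι : Type*} [Fintype ι] [DecidableEq ι]

noncomputable def energyDensity (ρ : EuclideanSpace ℝ ι → ℝ) (u : EuclideanSpace ℝ ι × ℝ → ℝ)
    (p : EuclideanSpace ℝ ι × ℝ) : ℝ :=
  ρ p.1 * timeDeriv u p ^ 2 + ∑ i, spaceDeriv (EuclideanSpace.single i 1) u p ^ 2

noncomputable def waveEnergy (ρ : EuclideanSpace ℝ ι → ℝ) (u : EuclideanSpace ℝ ι × ℝ → ℝ)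
    (t : ℝ) : ℝ :=
  ∫ x, energyDensity ρ u (x, t)

noncomputable def energyRate (ρ : EuclideanSpace ℝ ι → ℝ) (u : EuclideanSpace ℝ ι × ℝ → ℝ)
    (p : EuclideanSpace ℝ ι × ℝ) : ℝ :=
  2 * (ρ p.1 * (timeDeriv u p * timeDeriv (timeDeriv u) p)
    + ∑ i, spaceDeriv (EuclideanSpace.single i 1) u p
        * timeDeriv (spaceDeriv (EuclideanSpace.single i 1) u) p)

variable {ρ : EuclideanSpace ℝ ι → ℝ} {u : EuclideanSpace ℝ ι × ℝ → ℝ}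
  {K : Set (EuclideanSpace ℝ ι)} {T R M : ℝ}

theorem hasDerivAt_energyDensity (hu : ContDiff ℝ 2 u) (x : EuclideanSpace ℝ ι) (t : ℝ) :
    HasDerivAt (fun s => energyDensity ρ u (x, s)) (energyRate ρ u (x, t)) t := by
  have hsq : ∀ w : EuclideanSpace ℝ ι × ℝ → ℝ, ContDiff ℝ 1 w →
      HasDerivAt (fun s => w (x, s) ^ 2) (2 * w (x, t) * timeDeriv w (x, t)) t := fun w hw => by
    simpa using (hasDerivAt_timeSlice (hw.differentiable one_ne_zero _)).fun_pow 2
  refine (((hsq _ (contDiff_timeDeriv hu)).const_mul (ρ x)).fun_add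
    (HasDerivAt.fun_sum (u := Finset.univ) fun i _ =>
      hsq _ (contDiff_spaceDeriv hu _))).congr_deriv ?_
  rw [energyRate, mul_add, Finset.mul_sum]
  congr 1
  · ring
  · exact Finset.sum_congr rfl fun i _ => by ring

theorem continuous_energyRate (hu : ContDiff ℝ 2 u) (x : EuclideanSpace ℝ ι) :
    Continuous fun s => energyRate ρ u (x, s) := by
  have hut := contDiff_timeDeriv hu
  have hui := contDiff_spaceDeriv hu
  have h₁ : Continuous (timeDeriv u) := hut.continuous
  have h₂ : Continuous (timeDeriv (timeDeriv u)) := (contDiff_timeDeriv hut).continuous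
  have h₃ : ∀ i, Continuous (spaceDeriv (EuclideanSpace.single i 1) u) :=
    fun i => (hui _).continuous
  have h₄ : ∀ i, Continuous (timeDeriv (spaceDeriv (EuclideanSpace.single i 1) u)) :=
    fun i => (contDiff_timeDeriv (hui _)).continuous
  simp only [energyRate]
  fun_prop

theorem integrable_energyRate (hu : ContDiff ℝ 2 u) (hρ : Measurable ρ) (hρR : ∀ x, ‖ρ x‖ ≤ R)
    (hK : IsCompact K) (hT : 0 < T) (hu0 : EqOn u 0 (Kᶜ ×ˢ Icc 0 T)) {t : ℝ} (ht : t ≤ T) :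
    Integrable (energyRate ρ u) (volume.prod (volume.restrict (Ioc 0 t))) := by
  have hu1 : ContDiff ℝ 1 u := hu.of_le one_le_two
  have hut := contDiff_timeDeriv hu
  have hui := contDiff_spaceDeriv hu
  have hG : Integrable (fun p => timeDeriv u p * timeDeriv (timeDeriv u) p)
      (volume.prod (volume.restrict (Ioc 0 t))) :=
    integrable_prod_restrict_of_eqOn_zero (hut.continuous.mul (contDiff_timeDeriv hut).continuous)
      hK (fun p hp => by simp [eqOn_timeDeriv_zero hu1 hK.isClosed hT hu0 hp]) ht
  have hH : Integrable (fun p => ∑ i, spaceDeriv (EuclideanSpace.single i 1) u p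
      * timeDeriv (spaceDeriv (EuclideanSpace.single i 1) u) p)
      (volume.prod (volume.restrict (Ioc 0 t))) :=
    integrable_prod_restrict_of_eqOn_zero (continuous_finsetSum _ fun i _ =>
      (hui _).continuous.mul (contDiff_timeDeriv (hui _)).continuous) hK
      (fun p hp => by simp [eqOn_spaceDeriv_zero hu1 hK.isClosed hT hu0 _ hp]) ht
  exact ((hG.bdd_mul (hρ.comp measurable_fst).aestronglyMeasurable
    (Eventually.of_forall fun p => hρR p.1)).add hH).const_mul 2

theorem integral_energyRate_eq_zero (hu : ContDiff ℝ 2 u) (hK : IsCompact K) (hT : 0 < T)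
    (hu0 : EqOn u 0 (Kᶜ ×ˢ Icc 0 T)) {t : ℝ} (ht : t ∈ Icc 0 T)
    (hwave : ∀ x, ρ x * timeDeriv (timeDeriv u) (x, t)
      = ∑ i, spaceDeriv (EuclideanSpace.single i 1)
          (spaceDeriv (EuclideanSpace.single i 1) u) (x, t)) :
    ∫ x, energyRate ρ u (x, t) = 0 := by
  set e : ι → EuclideanSpace ℝ ι := fun i => EuclideanSpace.single i 1
  have hut : ContDiff ℝ 1 (timeDeriv u) := contDiff_timeDeriv hu
  have hui : ∀ i, ContDiff ℝ 1 (spaceDeriv (e i) u) := fun i => contDiff_spaceDeriv hu (e i)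
  have hut0 : EqOn (timeDeriv u) 0 (Kᶜ ×ˢ Icc 0 T) :=
    eqOn_timeDeriv_zero (hu.of_le one_le_two) hK.isClosed hT hu0
  have hint₁ : ∀ i, Integrable fun x =>
      timeDeriv u (x, t) * spaceDeriv (e i) (spaceDeriv (e i) u) (x, t) := fun i =>
    integrable_slice_of_eqOn_zero
      (hut.continuous.mul (contDiff_spaceDeriv (hui i) (e i)).continuous) hK
      (fun p hp => by simp [hut0 hp]) ht
  have hint₂ : ∀ i, Integrable fun x =>
      spaceDeriv (e i) (timeDeriv u) (x, t) * spaceDeriv (e i) u (x, t) := fun i =>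
    integrable_slice_of_eqOn_zero
      ((contDiff_spaceDeriv hut (e i)).continuous.mul (hui i).continuous) hK
      (fun p hp => by simp [eqOn_spaceDeriv_zero hut hK.isClosed hT hut0 (e i) hp]) ht
  -- By the wave equation and `∂ₜ∂ᵢu = ∂ᵢ∂ₜu`, the rate is `2 ∑ᵢ (v ∂ᵢw + (∂ᵢv) w)` with
  -- `v = ∂ₜu` and `w = ∂ᵢu`, whose integral vanishes by parts.
  have hrate : ∀ x, energyRate ρ u (x, t)
      = 2 * ∑ i, (timeDeriv u (x, t) * spaceDeriv (e i) (spaceDeriv (e i) u) (x, t)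
        + spaceDeriv (e i) (timeDeriv u) (x, t) * spaceDeriv (e i) u (x, t)) := fun x => by
    rw [energyRate, mul_left_comm, hwave, Finset.mul_sum, ← Finset.sum_add_distrib]
    congr 1
    refine Finset.sum_congr rfl fun i _ => ?_
    rw [timeDeriv_spaceDeriv hu]
    ring
  have hint : ∀ i, Integrable fun x =>
      timeDeriv u (x, t) * spaceDeriv (e i) (spaceDeriv (e i) u) (x, t)
        + spaceDeriv (e i) (timeDeriv u) (x, t) * spaceDeriv (e i) u (x, t) :=
    fun i => (hint₁ i).add (hint₂ i)
  rw [integral_congr_ae (Eventually.of_forall hrate), integral_const_mul,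
    integral_finsetSum _ fun i _ => hint i]
  refine mul_eq_zero_of_right 2 (Finset.sum_eq_zero fun i _ => ?_)
  rw [integral_add (hint₁ i) (hint₂ i), integral_mul_spaceDeriv_eq_neg hut (hui i) hK hT hut0 ht,
    neg_add_cancel]

theorem integrable_energyDensity (hu : ContDiff ℝ 1 u) (hρ : Measurable ρ)
    (hρR : ∀ x, ‖ρ x‖ ≤ R) (hK : IsCompact K) (hT : 0 < T) (hu0 : EqOn u 0 (Kᶜ ×ˢ Icc 0 T))
    {t : ℝ} (ht : t ∈ Icc 0 T) : Integrable (fun x => energyDensity ρ u (x, t)) :=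
  ((integrable_sq_slice_of_eqOn_zero (contDiff_timeDeriv (k := 0) hu).continuous hK
      (eqOn_timeDeriv_zero hu hK.isClosed hT hu0) ht).bdd_mul hρ.aestronglyMeasurable
    (Eventually.of_forall hρR)).add <| integrable_finsetSum _ fun _ _ =>
      integrable_sq_slice_of_eqOn_zero (contDiff_spaceDeriv (k := 0) hu _).continuous hK
        (eqOn_spaceDeriv_zero hu hK.isClosed hT hu0 _) ht

theorem waveEnergy_eq_waveEnergy_zero (hu : ContDiff ℝ 2 u) (hρ : Measurable ρ)
    (hρR : ∀ x, ‖ρ x‖ ≤ R) (hK : IsCompact K) (hT : 0 < T) (hu0 : EqOn u 0 (Kᶜ ×ˢ Icc 0 T))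
    (hwave : ∀ x, ∀ t ∈ Ioo 0 T, ρ x * timeDeriv (timeDeriv u) (x, t)
      = ∑ i, spaceDeriv (EuclideanSpace.single i 1)
          (spaceDeriv (EuclideanSpace.single i 1) u) (x, t))
    {t : ℝ} (ht : t ∈ Icc 0 T) : waveEnergy ρ u t = waveEnergy ρ u 0 := by
  have hu1 : ContDiff ℝ 1 u := hu.of_le one_le_two
  have hftc : ∀ x, energyDensity ρ u (x, t) - energyDensity ρ u (x, 0)
      = ∫ s in 0..t, energyRate ρ u (x, s) := fun x =>
    (intervalIntegral.integral_eq_sub_of_hasDerivAt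
      (fun s _ => hasDerivAt_energyDensity hu x s)
      ((continuous_energyRate hu x).intervalIntegrable _ _)).symm
  have hzero : ∀ s ∈ Ioo 0 t, ∫ x, energyRate ρ u (x, s) = 0 := fun s hs =>
    integral_energyRate_eq_zero hu hK hT hu0 ⟨hs.1.le, hs.2.le.trans ht.2⟩
      fun x => hwave x s ⟨hs.1, hs.2.trans_le ht.2⟩
  rw [← sub_eq_zero]
  calc waveEnergy ρ u t - waveEnergy ρ u 0
      = ∫ x, (energyDensity ρ u (x, t) - energyDensity ρ u (x, 0)) :=
        (integral_sub (integrable_energyDensity hu1 hρ hρR hK hT hu0 ht)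
          (integrable_energyDensity hu1 hρ hρR hK hT hu0 ⟨le_rfl, hT.le⟩)).symm
    _ = ∫ x, ∫ s in 0..t, energyRate ρ u (x, s) := by simp_rw [hftc]
    _ = ∫ s in 0..t, ∫ x, energyRate ρ u (x, s) :=
        integral_intervalIntegral_swap ht.1 (integrable_energyRate hu hρ hρR hK hT hu0 ht.2)
    _ = 0 := by
        rw [intervalIntegral.integral_of_le ht.1, integral_Ioc_eq_integral_Ioo,
          setIntegral_congr_fun measurableSet_Ioo hzero, integral_zero]

theorem integral_timeDeriv_sq_le_waveEnergy (hu : ContDiff ℝ 1 u) (hρ : Measurable ρ)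
    (hρR : ∀ x, ‖ρ x‖ ≤ R) (hM0 : 0 ≤ M) (hM : ∀ x, 1 ≤ M * ρ x) (hK : IsCompact K)
    (hT : 0 < T) (hu0 : EqOn u 0 (Kᶜ ×ˢ Icc 0 T)) {t : ℝ} (ht : t ∈ Icc 0 T) :
    ∫ x, timeDeriv u (x, t) ^ 2 ≤ M * waveEnergy ρ u t := by
  rw [waveEnergy, ← integral_const_mul]
  refine integral_mono (integrable_slice_of_eqOn_zero
      ((contDiff_timeDeriv (k := 0) hu).continuous.pow 2) hK
      (fun p hp => by simp [eqOn_timeDeriv_zero hu hK.isClosed hT hu0 hp]) ht)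
    ((integrable_energyDensity hu hρ hρR hK hT hu0 ht).const_mul M) fun x => ?_
  have hsum : 0 ≤ ∑ i, spaceDeriv (EuclideanSpace.single i 1) u (x, t) ^ 2 :=
    Finset.sum_nonneg fun i _ => sq_nonneg _
  simp only [energyDensity]
  nlinarith [hM x, sq_nonneg (timeDeriv u (x, t)), mul_nonneg hM0 hsum]

theorem integral_sum_spaceDeriv_sq_le_waveEnergy (hu : ContDiff ℝ 1 u) (hρ : Measurable ρ)
    (hρ0 : ∀ x, 0 ≤ ρ x) (hρR : ∀ x, ‖ρ x‖ ≤ R) (hK : IsCompact K) (hT : 0 < T)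
    (hu0 : EqOn u 0 (Kᶜ ×ˢ Icc 0 T)) {t : ℝ} (ht : t ∈ Icc 0 T) :
    ∫ x, ∑ i, spaceDeriv (EuclideanSpace.single i 1) u (x, t) ^ 2 ≤ waveEnergy ρ u t := by
  refine integral_mono (integrable_finsetSum _ fun i _ => integrable_slice_of_eqOn_zero
      ((contDiff_spaceDeriv (k := 0) hu _).continuous.pow 2) hK
      (fun p hp => by simp [eqOn_spaceDeriv_zero hu hK.isClosed hT hu0 _ hp]) ht)
    (integrable_energyDensity hu hρ hρR hK hT hu0 ht) fun x => ?_
  simp only [energyDensity]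
  nlinarith [hρ0 x, sq_nonneg (timeDeriv u (x, t))]

theorem integrable_norm_gradient_slice_sq (hu : ContDiff ℝ 1 u) (hK : IsCompact K) (hT : 0 < T)
    (hu0 : EqOn u 0 (Kᶜ ×ˢ Icc 0 T)) {t : ℝ} (ht : t ∈ Icc 0 T) :
    Integrable fun x => ‖gradient (fun z => u (z, t)) x‖ ^ 2 := by
  simp only [norm_gradient_slice_sq (hu.differentiable one_ne_zero)]
  exact integrable_finsetSum _ fun i _ => integrable_sq_slice_of_eqOn_zero
    (contDiff_spaceDeriv (k := 0) hu _).continuous hK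
    (eqOn_spaceDeriv_zero hu hK.isClosed hT hu0 _) ht

theorem integral_sq_add_norm_gradient_sq_le (hu : ContDiff ℝ 2 u) (hρ : Measurable ρ)
    (hρ0 : ∀ x, 0 ≤ ρ x) (hρR : ∀ x, ‖ρ x‖ ≤ R) (hM0 : 0 ≤ M) (hM : ∀ x, 1 ≤ M * ρ x)
    (hK : IsCompact K) (hT : 0 < T) (hu0 : EqOn u 0 (Kᶜ ×ˢ Icc 0 T))
    (hwave : ∀ x, ∀ t ∈ Ioo 0 T, ρ x * timeDeriv (timeDeriv u) (x, t)
      = ∑ i, spaceDeriv (EuclideanSpace.single i 1)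
          (spaceDeriv (EuclideanSpace.single i 1) u) (x, t))
    {t : ℝ} (ht : t ∈ Icc 0 T) :
    ∫ x, (u (x, t) ^ 2 + ‖gradient (fun z => u (z, t)) x‖ ^ 2)
      ≤ 2 * (∫ x, u (x, 0) ^ 2) + (1 + 2 * M * t ^ 2) * waveEnergy ρ u 0 := by
  have hu1 : ContDiff ℝ 1 u := hu.of_le (by norm_num)
  have hE : ∀ s ∈ Icc 0 T, waveEnergy ρ u s = waveEnergy ρ u 0 :=
    fun s hs => waveEnergy_eq_waveEnergy_zero hu hρ hρR hK hT hu0 hwave hs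
  have hgrad := fun x => norm_gradient_slice_sq (hu1.differentiable one_ne_zero) x t
  have hkin := integral_sum_spaceDeriv_sq_le_waveEnergy hu1 hρ hρ0 hρR hK hT hu0 ht
  have hpot : ∫ x, u (x, t) ^ 2 ≤ 2 * (∫ x, u (x, 0) ^ 2) + 2 * t ^ 2 * (M * waveEnergy ρ u 0) :=
    integral_sq_le_of_integral_timeDeriv_sq_le hu1 hK hT hu0 ht fun s hs =>
      (integral_timeDeriv_sq_le_waveEnergy hu1 hρ hρR hM0 hM hK hT hu0
        ⟨hs.1, hs.2.trans ht.2⟩).trans_eq (by rw [hE s ⟨hs.1, hs.2.trans ht.2⟩])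
  rw [integral_add (integrable_sq_slice_of_eqOn_zero hu.continuous hK hu0 ht)
    (integrable_norm_gradient_slice_sq hu1 hK hT hu0 ht),
    integral_congr_ae (Eventually.of_forall hgrad)]
  rw [hE t ht] at hkin
  nlinarith

theorem waveEnergy_zero_eq (hu : Differentiable ℝ u) (hu₀ : ∀ x, timeDeriv u (x, 0) = 0) :
    waveEnergy ρ u 0 = ∫ x, ‖gradient (fun z => u (z, 0)) x‖ ^ 2 := by
  simp only [waveEnergy, energyDensity, hu₀, norm_gradient_slice_sq hu]
  simp

theorem integral_sq_add_norm_gradient_sq_le_of_poincare (hu : ContDiff ℝ 2 u)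
    (hρ : Measurable ρ) (hρ0 : ∀ x, 0 ≤ ρ x) (hρR : ∀ x, ‖ρ x‖ ≤ R) (hM0 : 0 ≤ M)
    (hM : ∀ x, 1 ≤ M * ρ x) (hK : IsCompact K) (hT : 0 < T) (hu0 : EqOn u 0 (Kᶜ ×ˢ Icc 0 T))
    (hwave : ∀ x, ∀ t ∈ Ioo 0 T, ρ x * timeDeriv (timeDeriv u) (x, t)
      = ∑ i, spaceDeriv (EuclideanSpace.single i 1)
          (spaceDeriv (EuclideanSpace.single i 1) u) (x, t))
    (hu₀ : ∀ x, timeDeriv u (x, 0) = 0) {C : ℝ} (hC : 0 < C)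
    (hP : C ^ 2 * ∫ x, (u (x, 0) ^ 2 + ‖gradient (fun z => u (z, 0)) x‖ ^ 2)
      ≤ ∫ x, ‖gradient (fun z => u (z, 0)) x‖ ^ 2) :
    ∀ t ∈ Icc 0 T, ∫ x, (u (x, t) ^ 2 + ‖gradient (fun z => u (z, t)) x‖ ^ 2)
      ≤ (1 + 2 / C ^ 2 * max 1 (M * T ^ 2)) * ∫ x, ‖gradient (fun z => u (z, 0)) x‖ ^ 2 := by
  intro t ht
  set E₀ := ∫ x, ‖gradient (fun z => u (z, 0)) x‖ ^ 2
  have hE₀ : 0 ≤ E₀ := integral_nonneg fun x => sq_nonneg _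
  have hu1 : ContDiff ℝ 1 u := hu.of_le one_le_two
  rw [integral_add (integrable_sq_slice_of_eqOn_zero hu.continuous hK hu0 ⟨le_rfl, hT.le⟩)
    (integrable_norm_gradient_slice_sq hu1 hK hT hu0 ⟨le_rfl, hT.le⟩)] at hP
  have hpoinc := two_mul_add_two_mul_le_of_poincare (q := M * T ^ 2)
    (integral_nonneg fun x => sq_nonneg _) hE₀ hC hP
  have htT : M * t ^ 2 * E₀ ≤ M * T ^ 2 * E₀ := by gcongr; exacts [ht.1, ht.2]
  have hest := integral_sq_add_norm_gradient_sq_le hu hρ hρ0 hρR hM0 hM hK hT hu0 hwave ht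
  rw [waveEnergy_zero_eq (hu.differentiable two_ne_zero) hu₀] at hest
  nlinarith

end WaveEnergy

theorem stmt_4_general
    {n : ℕ}
    (c : EuclideanSpace ℝ (Fin n) → ℝ) (hc_meas : Measurable c)
    (c_min c_max : ℝ) (hc_min_pos : 0 < c_min)
    (hc : ∀ x, c_min ≤ c x ∧ c x ≤ c_max)
    (T : ℝ) (hT : 0 < T)
    (f : EuclideanSpace ℝ (Fin n) → ℝ)
    (y : EuclideanSpace ℝ (Fin n) → ℝ → ℝ)
    (hy : ContDiff ℝ 2 (fun p : EuclideanSpace ℝ (Fin n) × ℝ => y p.1 p.2))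
    (K : Set (EuclideanSpace ℝ (Fin n))) (hK : IsCompact K)
    (hyK : ∀ x ∉ K, ∀ t ∈ Set.Icc (0:ℝ) T, y x t = 0)
    (hwave : ∀ x, ∀ t ∈ Set.Ioo (0:ℝ) T,
      ((c x) ^ 2)⁻¹ * deriv (deriv (y x)) t = spatialLaplacian (fun x' => y x' t) x)
    (hinit : ∀ x, y x 0 = f x)
    (hinit' : ∀ x, deriv (y x) 0 = 0)
    (C₀ : ℝ) (hC₀ : 0 < C₀)
    (hPoincare : C₀ ^ 2 * (∫ x, ((f x) ^ 2 + ‖gradient f x‖ ^ 2)) ≤ ∫ x, ‖gradient f x‖ ^ 2)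
    (μ : Measure (EuclideanSpace ℝ (Fin n)))
    (Cγ : ℝ)
    (htrace : ∀ t ∈ Set.Icc (0:ℝ) T,
      (∫ x, (y x t) ^ 2 ∂μ)
        ≤ Cγ ^ 2 * ∫ x, ((y x t) ^ 2 + ‖gradient (fun x' => y x' t) x‖ ^ 2)) :
    (∫ t in (0:ℝ)..T, ∫ x, (y x t) ^ 2 ∂μ)
      ≤ Cγ ^ 2 * (1 + 2 / C₀ ^ 2 * max 1 (c_max ^ 2 * T ^ 2)) * T
          * ∫ x, ‖gradient f x‖ ^ 2 := by
  obtain rfl : f = fun x => y x 0 := funext fun x => (hinit x).symm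
  set u : EuclideanSpace ℝ (Fin n) × ℝ → ℝ := fun p => y p.1 p.2
  set ρ : EuclideanSpace ℝ (Fin n) → ℝ := fun x => ((c x) ^ 2)⁻¹
  have hud : Differentiable ℝ u := hy.differentiable two_ne_zero
  have hwave' : ∀ x, ∀ t ∈ Ioo 0 T, ρ x * timeDeriv (timeDeriv u) (x, t)
      = ∑ i, spaceDeriv (EuclideanSpace.single i 1)
          (spaceDeriv (EuclideanSpace.single i 1) u) (x, t) := fun x t ht => by
    rw [← deriv_deriv_timeSlice hy, ← spatialLaplacian_slice hy]
    exact hwave x t ht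
  have hest := integral_sq_add_norm_gradient_sq_le_of_poincare (ρ := ρ) (M := c_max ^ 2) hy
    (hc_meas.pow_const 2).inv (fun x => inv_nonneg.2 (sq_nonneg _))
    (fun x => norm_inv_sq_le hc_min_pos (hc x).1) (sq_nonneg c_max)
    (fun x => one_le_sq_mul_inv_sq (hc_min_pos.trans_le (hc x).1) (hc x).2) hK hT
    (fun p hp => hyK p.1 hp.1 p.2 hp.2) hwave'
    (fun x => (hasDerivAt_timeSlice (hud (x, 0))).deriv.symm.trans (hinit' x)) hC₀ hPoincare
  calc (∫ t in (0:ℝ)..T, ∫ x, (y x t) ^ 2 ∂μ)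
      ≤ Cγ ^ 2 * ((1 + 2 / C₀ ^ 2 * max 1 (c_max ^ 2 * T ^ 2))
          * ∫ x, ‖gradient (fun x => y x 0) x‖ ^ 2) * T :=
        intervalIntegral_le_mul_of_le hT.le (fun t _ => integral_nonneg fun x => sq_nonneg _)
          fun t ht => (htrace t ⟨ht.1.le, ht.2⟩).trans
            (mul_le_mul_of_nonneg_left (hest t ⟨ht.1.le, ht.2⟩) (sq_nonneg Cγ))
    _ = _ := by ring

theorem stmt_4
    {n : ℕ} (hn : 1 ≤ n)
    (c : EuclideanSpace ℝ (Fin n) → ℝ) (hc_meas : Measurable c)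
    (c_min c_max : ℝ) (hc_min_pos : 0 < c_min)
    (hc : ∀ x, c_min ≤ c x ∧ c x ≤ c_max)
    (T : ℝ) (hT : 0 < T)
    (f : EuclideanSpace ℝ (Fin n) → ℝ)
    (hf : ContDiff ℝ 2 f) (hf_supp : HasCompactSupport f)
    (y : EuclideanSpace ℝ (Fin n) → ℝ → ℝ)
    (hy : ContDiff ℝ 2 (fun p : EuclideanSpace ℝ (Fin n) × ℝ => y p.1 p.2))
    (K : Set (EuclideanSpace ℝ (Fin n))) (hK : IsCompact K)
    (hyK : ∀ x ∉ K, ∀ t ∈ Set.Icc (0:ℝ) T, y x t = 0)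
    (hwave : ∀ x, ∀ t ∈ Set.Ioo (0:ℝ) T,
      ((c x) ^ 2)⁻¹ * deriv (deriv (y x)) t = spatialLaplacian (fun x' => y x' t) x)
    (hinit : ∀ x, y x 0 = f x)
    (hinit' : ∀ x, deriv (y x) 0 = 0)
    (C₀ : ℝ) (hC₀ : 0 < C₀)
    (hPoincare : C₀ ^ 2 * (∫ x, ((f x) ^ 2 + ‖gradient f x‖ ^ 2)) ≤ ∫ x, ‖gradient f x‖ ^ 2)
    (Ω : Set (EuclideanSpace ℝ (Fin n))) (hΩ_open : IsOpen Ω) (hΩ_bdd : Bornology.IsBounded Ω)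
    (μ : Measure (EuclideanSpace ℝ (Fin n)))
    (hμ : μ = (MeasureTheory.Measure.hausdorffMeasure ((n : ℝ) - 1)).restrict (frontier Ω))
    (Cγ : ℝ) (hCγ : 0 < Cγ)
    (htrace : ∀ t ∈ Set.Icc (0:ℝ) T,
      (∫ x, (y x t) ^ 2 ∂μ)
        ≤ Cγ ^ 2 * ∫ x, ((y x t) ^ 2 + ‖gradient (fun x' => y x' t) x‖ ^ 2)) :
    (∫ t in (0:ℝ)..T, ∫ x, (y x t) ^ 2 ∂μ)
      ≤ Cγ ^ 2 * (1 + 2 / C₀ ^ 2 * max 1 (c_max ^ 2 * T ^ 2)) * T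
          * ∫ x, ‖gradient f x‖ ^ 2 :=
  stmt_4_general c hc_meas c_min c_max hc_min_pos hc T hT f y hy K hK hyK hwave hinit hinit' C₀ hC₀
    hPoincare μ Cγ htrace
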